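/- For any integer p ≥ 1 and all n, N ≥ 1, b_n^N ≤ w_{⌈np⌉ + nN + N, p}, where b_n counts partially directed paths in the quadrant (wedge between X=0 and Y=0) ending on the line Y=0, and w_{m,p} counts partially directed paths of length m in the asymmetric wedge W_p. -/

import Mathlib

/-!
Start with `n p` east steps and then append, one at a time, `N` quadrant paths of length `n`
ending on `Y = 0`, each preceded by an east step. Before each block the path ends at some `(x, 0)`
with `n ≤ p x`, so the block, which stays in the strip `0 ≤ y ≤ n` to the right of `(x, 0)`, stays
in `W_p`, and the new endpoint is again of this kind. Since the blocks have fixed length, the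
resulting path of length `n p + N (n + 1)` determines them.
-/

/-- Allowed steps: north, south, east. -/
def AllowedStep (s : ℤ × ℤ) : Prop := s = (0, 1) ∨ s = (0, -1) ∨ s = (1, 0)

/-- No north step immediately follows a south step or vice versa. -/
def NoReversal (l : List (ℤ × ℤ)) : Prop :=
  l.Chain' (fun s t => ¬(s = (0, 1) ∧ t = (0, -1)) ∧ ¬(s = (0, -1) ∧ t = (0, 1)))

/-- A partially directed self-avoiding path of length `n`, encoded by its list of steps. -/
def IsPDPath (n : ℕ) (l : List (ℤ × ℤ)) : Prop :=
  l.length = n ∧ (∀ s ∈ l, AllowedStep s) ∧ NoReversal l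

/-- The vertices visited by a path starting at the origin. -/
def pathVertices (l : List (ℤ × ℤ)) : List (ℤ × ℤ) := l.scanl (· + ·) (0, 0)

/-- Number of unrestricted partially directed paths of length `n`. -/
noncomputable def numPD (n : ℕ) : ℕ := Nat.card {l : List (ℤ × ℤ) // IsPDPath n l}

/-- Membership in the symmetric wedge `V_p`. -/
def InSymWedge (p : ℕ) (q : ℤ × ℤ) : Prop :=
  0 ≤ q.1 ∧ -(p : ℤ) * q.1 ≤ q.2 ∧ q.2 ≤ (p : ℤ) * q.1

/-- Membership in the asymmetric wedge `W_p`. -/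
def InAsymWedge (p : ℕ) (q : ℤ × ℤ) : Prop :=
  0 ≤ q.1 ∧ 0 ≤ q.2 ∧ q.2 ≤ (p : ℤ) * q.1

/-- Number of partially directed paths of length `n` confined to the symmetric wedge `V_p`. -/
noncomputable def numPDsym (p n : ℕ) : ℕ :=
  Nat.card {l : List (ℤ × ℤ) // IsPDPath n l ∧ ∀ q ∈ pathVertices l, InSymWedge p q}

/-- Number of partially directed paths of length `n` confined to the asymmetric wedge `W_p`. -/
noncomputable def numPDasym (p n : ℕ) : ℕ :=
  Nat.card {l : List (ℤ × ℤ) // IsPDPath n l ∧ ∀ q ∈ pathVertices l, InAsymWedge p q}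

/-- Number of partially directed paths of length `n` in the quadrant (x ≥ 0 and y ≥ 0)
whose last vertex lies on the line `Y = 0`. -/
noncomputable def numPDquadEnd0 (n : ℕ) : ℕ :=
  Nat.card {l : List (ℤ × ℤ) //
    IsPDPath n l ∧ (∀ q ∈ pathVertices l, 0 ≤ q.1 ∧ 0 ≤ q.2) ∧ l.sum.2 = 0}

/-- Number of partially directed paths of length `n` lying on or above the line `Y = 0`. -/
noncomputable def numPDhalf (n : ℕ) : ℕ :=
  Nat.card {l : List (ℤ × ℤ) // IsPDPath n l ∧ ∀ q ∈ pathVertices l, 0 ≤ q.2}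

/-- Number of partially directed paths of length `n` lying on or above the line `Y = 0`
whose last vertex lies on the line `Y = 0`. -/
noncomputable def numPDhalfEnd0 (n : ℕ) : ℕ :=
  Nat.card {l : List (ℤ × ℤ) //
    IsPDPath n l ∧ (∀ q ∈ pathVertices l, 0 ≤ q.2) ∧ l.sum.2 = 0}

theorem List.scanl_add_eq_map {α : Type*} [AddMonoid α] (a b : α) (l : List α) :
    l.scanl (· + ·) (a + b) = (l.scanl (· + ·) b).map (a + ·) := by
  induction l generalizing b with
  | nil => simp
  | cons s l ih => simp only [List.scanl_cons, List.map_cons, add_assoc, ih]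

theorem pathVertices_cons (s : ℤ × ℤ) (l : List (ℤ × ℤ)) :
    pathVertices (s :: l) = (0, 0) :: (pathVertices l).map (s + ·) := by
  rw [pathVertices, List.scanl_cons, Prod.mk_zero_zero, zero_add, ← add_zero s,
    List.scanl_add_eq_map, add_zero]
  rfl

theorem sum_mem_pathVertices (l : List (ℤ × ℤ)) : l.sum ∈ pathVertices l := by
  rw [List.sum_eq_foldl]
  exact List.mem_of_getLast? List.getLast?_scanl

theorem mem_pathVertices_append {l₁ l₂ : List (ℤ × ℤ)} {q : ℤ × ℤ}
    (hq : q ∈ pathVertices (l₁ ++ l₂)) :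
    q ∈ pathVertices l₁ ∨ ∃ v ∈ pathVertices l₂, q = l₁.sum + v := by
  rw [pathVertices, List.scanl_append, List.mem_append, Prod.mk_zero_zero, ← List.sum_eq_foldl,
    ← add_zero l₁.sum, List.scanl_add_eq_map] at hq
  refine hq.imp id fun h => ?_
  obtain ⟨v, hv, rfl⟩ := List.mem_map.1 (List.mem_of_mem_tail h)
  exact ⟨v, hv, rfl⟩

theorem snd_le_length_of_mem_pathVertices {l : List (ℤ × ℤ)} (hl : ∀ s ∈ l, AllowedStep s)
    {q : ℤ × ℤ} (hq : q ∈ pathVertices l) : q.2 ≤ l.length := by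
  induction l generalizing q with
  | nil => simp_all [pathVertices]
  | cons s l ih =>
    rw [pathVertices_cons, List.mem_cons, List.mem_map] at hq
    rcases hq with rfl | ⟨v, hv, rfl⟩
    · simp only [List.length_cons]
      omega
    · have hs : s.2 ≤ 1 := by rcases hl s (by simp) with rfl | rfl | rfl <;> simp
      have hv := ih (fun t ht => hl t (List.mem_cons_of_mem s ht)) hv
      simp only [Prod.snd_add, List.length_cons, Nat.cast_succ]
      omega

theorem mem_pathVertices_replicate_east {k : ℕ} {q : ℤ × ℤ}
    (hq : q ∈ pathVertices (List.replicate k (1, 0))) : q.2 = 0 ∧ 0 ≤ q.1 := by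
  induction k generalizing q with
  | zero => simp_all [pathVertices]
  | succ k ih =>
    rw [List.replicate_succ, pathVertices_cons, List.mem_cons, List.mem_map] at hq
    rcases hq with rfl | ⟨v, hv, rfl⟩
    · simp
    · obtain ⟨hy, hx⟩ := ih hv
      simp only [Prod.fst_add, Prod.snd_add]
      omega

theorem IsPDPath.append_east {m n : ℕ} {l₁ l₂ : List (ℤ × ℤ)} (h₁ : IsPDPath m l₁)
    (h₂ : IsPDPath n l₂) : IsPDPath (m + n + 1) (l₁ ++ (1, 0) :: l₂) := by
  obtain ⟨hlen₁, hsteps₁, hrev₁⟩ := h₁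
  obtain ⟨hlen₂, hsteps₂, hrev₂⟩ := h₂
  refine ⟨by simp [hlen₁, hlen₂]; omega, ?_, ?_⟩
  · simp only [List.mem_append, List.mem_cons]
    rintro s (hs | rfl | hs)
    exacts [hsteps₁ s hs, Or.inr (Or.inr rfl), hsteps₂ s hs]
  · exact List.isChain_append.2
      ⟨hrev₁, List.isChain_cons.2 ⟨by simp, hrev₂⟩, by simp⟩

theorem isPDPath_replicate_east (k : ℕ) : IsPDPath k (List.replicate k (1, 0)) := by
  induction k with
  | zero => exact ⟨rfl, by simp, List.IsChain.nil⟩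
  | succ k ih =>
    rw [List.replicate_succ']
    exact ih.append_east (n := 0) ⟨rfl, by simp, List.IsChain.nil⟩

/-- `h ≤ p x` at the endpoint `(x, 0)` says that `W_p` contains the strip `0 ≤ y ≤ h` to the
right of the endpoint. -/
def IsWedgeBase (p h m : ℕ) (l : List (ℤ × ℤ)) : Prop :=
  IsPDPath m l ∧ (∀ q ∈ pathVertices l, InAsymWedge p q) ∧ l.sum.2 = 0 ∧ (h : ℤ) ≤ p * l.sum.1

theorem isWedgeBase_replicate_east {p h k : ℕ} (hk : h ≤ p * k) :
    IsWedgeBase p h k (List.replicate k (1, 0)) := by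
  refine ⟨isPDPath_replicate_east k, fun q hq => ?_, by simp, by simp; exact_mod_cast hk⟩
  obtain ⟨hy, hx⟩ := mem_pathVertices_replicate_east hq
  exact ⟨hx, hy.ge, hy ▸ mul_nonneg (Nat.cast_nonneg p) hx⟩

theorem IsWedgeBase.append_east {p n m : ℕ} {l₀ l : List (ℤ × ℤ)} (h₀ : IsWedgeBase p n m l₀)
    (hl : IsPDPath n l) (hquad : ∀ q ∈ pathVertices l, 0 ≤ q.1 ∧ 0 ≤ q.2) (hend : l.sum.2 = 0) :
    IsWedgeBase p n (m + n + 1) (l₀ ++ (1, 0) :: l) := by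
  obtain ⟨hpd, hwedge, hend₀, hroom⟩ := h₀
  have hx₀ : 0 ≤ l₀.sum.1 := (hwedge _ (sum_mem_pathVertices l₀)).1
  have hx : 0 ≤ l.sum.1 := (hquad _ (sum_mem_pathVertices l)).1
  have hsum : (l₀ ++ (1, 0) :: l).sum = l₀.sum + ((1, 0) + l.sum) := by simp
  have hp : (0 : ℤ) ≤ p := Nat.cast_nonneg p
  refine ⟨hpd.append_east hl, fun q hq => ?_, by simp [hsum, hend₀, hend], ?_⟩
  · rcases mem_pathVertices_append hq with hq | ⟨v, hv, rfl⟩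
    · exact hwedge q hq
    rw [pathVertices_cons, List.mem_cons, List.mem_map] at hv
    rcases hv with rfl | ⟨w, hw, rfl⟩
    · rw [Prod.mk_zero_zero, add_zero]
      exact hwedge _ (sum_mem_pathVertices l₀)
    obtain ⟨hwx, hwy⟩ := hquad w hw
    have hwn : w.2 ≤ n := hl.1 ▸ snd_le_length_of_mem_pathVertices hl.2.1 hw
    simp only [InAsymWedge, Prod.fst_add, Prod.snd_add, hend₀]
    refine ⟨by omega, by omega, ?_⟩
    nlinarith
  · simp only [hsum, Prod.fst_add]
    nlinarith

theorem finite_setOf_isPDPath (m : ℕ) : {l : List (ℤ × ℤ) | IsPDPath m l}.Finite := by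
  have : Finite {s : ℤ × ℤ // AllowedStep s} :=
    Set.Finite.to_subtype <| (Set.toFinite {(0, 1), (0, -1), (1, 0)}).subset fun s hs => by
      simp only [Set.mem_insert_iff, Set.mem_singleton_iff]
      exact hs
  refine ((List.finite_length_eq {s // AllowedStep s} m).image (List.map Subtype.val)).subset ?_
  rintro l ⟨hlen, hsteps, -⟩
  lift l to List {s // AllowedStep s} using hsteps
  exact ⟨l, by simpa using hlen, rfl⟩

instance (p h m : ℕ) : Finite {l // IsWedgeBase p h m l} :=
  ((finite_setOf_isPDPath m).subset fun _ hl => hl.1).to_subtype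

theorem card_isWedgeBase_le_numPDasym (p h m : ℕ) :
    Nat.card {l // IsWedgeBase p h m l} ≤ numPDasym p m :=
  have : Finite {l // IsPDPath m l ∧ ∀ q ∈ pathVertices l, InAsymWedge p q} :=
    ((finite_setOf_isPDPath m).subset fun _ hl => hl.1).to_subtype
  Nat.card_le_card_of_injective (Subtype.impEmbedding _ _ fun _ hl => ⟨hl.1, hl.2.1⟩)
    (Subtype.impEmbedding _ _ _).injective

theorem card_isWedgeBase_mul_numPDquadEnd0_le (p n m : ℕ) :
    Nat.card {l // IsWedgeBase p n m l} * numPDquadEnd0 n ≤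
      Nat.card {l // IsWedgeBase p n (m + n + 1) l} := by
  rw [numPDquadEnd0, ← Nat.card_prod]
  refine Nat.card_le_card_of_injective
    (fun x => ⟨x.1.1 ++ (1, 0) :: x.2.1, x.1.2.append_east x.2.2.1 x.2.2.2.1 x.2.2.2.2⟩) ?_
  rintro ⟨⟨l₀, h₀⟩, ⟨l, hl⟩⟩ ⟨⟨l₀', h₀'⟩, ⟨l', hl'⟩⟩ heq
  obtain ⟨rfl, h⟩ := List.append_inj (congrArg Subtype.val heq) (h₀.1.1.trans h₀'.1.1.symm)
  obtain rfl := List.cons_injective h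
  rfl

theorem card_isWedgeBase_mul_numPDquadEnd0_pow_le (p n m N : ℕ) :
    Nat.card {l // IsWedgeBase p n m l} * numPDquadEnd0 n ^ N ≤
      Nat.card {l // IsWedgeBase p n (m + N * (n + 1)) l} := by
  induction N with
  | zero => simp
  | succ N ih =>
    calc Nat.card {l // IsWedgeBase p n m l} * numPDquadEnd0 n ^ (N + 1)
        = Nat.card {l // IsWedgeBase p n m l} * numPDquadEnd0 n ^ N * numPDquadEnd0 n := by ring
      _ ≤ Nat.card {l // IsWedgeBase p n (m + N * (n + 1)) l} * numPDquadEnd0 n :=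
        Nat.mul_le_mul_right _ ih
      _ ≤ Nat.card {l // IsWedgeBase p n (m + N * (n + 1) + n + 1) l} :=
        card_isWedgeBase_mul_numPDquadEnd0_le p n _
      _ = Nat.card {l // IsWedgeBase p n (m + (N + 1) * (n + 1)) l} := by ring_nf

theorem quadrant_to_asymWedge_general (p : ℕ) (hp : 1 ≤ p) (n N : ℕ) :
    numPDquadEnd0 n ^ N ≤ numPDasym p (n * p + n * N + N) := by
  have : Nonempty {l // IsWedgeBase p n (n * p) l} :=
    ⟨⟨_, isWedgeBase_replicate_east (by nlinarith [Nat.mul_le_mul hp hp])⟩⟩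
  calc numPDquadEnd0 n ^ N
      ≤ Nat.card {l // IsWedgeBase p n (n * p) l} * numPDquadEnd0 n ^ N :=
        Nat.le_mul_of_pos_left _ Nat.card_pos
    _ ≤ Nat.card {l // IsWedgeBase p n (n * p + N * (n + 1)) l} :=
        card_isWedgeBase_mul_numPDquadEnd0_pow_le p n _ N
    _ ≤ numPDasym p (n * p + N * (n + 1)) := card_isWedgeBase_le_numPDasym p n _
    _ = numPDasym p (n * p + n * N + N) := by ring_nf

theorem quadrant_to_asymWedge (p : ℕ) (hp : 1 ≤ p) (n N : ℕ) (hn : 1 ≤ n) (hN : 1 ≤ N) :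
    numPDquadEnd0 n ^ N ≤ numPDasym p (n * p + n * N + N) :=
  quadrant_to_asymWedge_general p hp n N
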